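/- Let P = (T, H, V) be a tiling problem and T_P the SSCC TBox defined in the context. If I is a finitely branching model of T_P (satisfying all concept inclusions and all transitivity axioms), then the binary relations h^I ∘ v^I = { (d,e) : ∃c, (d,c) ∈ h^I and (c,e) ∈ v^I } and v^I ∘ h^I = { (d,e) : ∃c, (d,c) ∈ v^I and (c,e) ∈ h^I } coincide, and this relation is functional: every d ∈ Δ^I has exactly one such successor e. -/

import Mathlib

namespace SSCC

mutual
/-- ALCSCC concepts (no concrete domain). -/
inductive Concept : Type where
  | atom (A : ℕ)
  | neg (C : Concept)
  | conj (C₁ C₂ : Concept)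
  | succr (con : QCon)

/-- Set terms whose set variables are role names and concepts. -/
inductive SetTerm : Type where
  | role (r : ℕ)
  | concept (C : Concept)
  | empty
  | univ
  | inter (s t : SetTerm)
  | union (s t : SetTerm)
  | compl (s : SetTerm)

inductive LinExpr : Type where
  | const (n : ℕ)
  | add (l₁ l₂ : LinExpr)
  | card (n : ℕ) (s : SetTerm)

inductive QCon : Type where
  | subset (s t : SetTerm)
  | seteq (s t : SetTerm)
  | numeq (l₁ l₂ : LinExpr)
  | numlt (l₁ l₂ : LinExpr)
  | dvd (n : ℕ) (l : LinExpr)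
  | not (c : QCon)
  | and (c₁ c₂ : QCon)
  | or (c₁ c₂ : QCon)
end

/-- An SSCC TBox: concept inclusions together with transitivity declarations. -/
structure STBox : Type where
  cis : List (Concept × Concept)
  trans : List ℕ

structure Interp : Type 1 where
  Δ : Type
  delta_nonempty : Nonempty Δ
  conc : ℕ → Set Δ
  role : ℕ → Δ → Δ → Prop

def Interp.succs (I : Interp) (d : I.Δ) : Set I.Δ := { e | ∃ r, I.role r d e }

def FinBranching (I : Interp) : Prop := ∀ d, (I.succs d).Finite

mutual
noncomputable def csem (I : Interp) : Concept → Set I.Δ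
  | .atom A => I.conc A
  | .neg C => (csem I C)ᶜ
  | .conj C₁ C₂ => csem I C₁ ∩ csem I C₂
  | .succr con => { d | qsat I d con }

noncomputable def ssem (I : Interp) (d : I.Δ) : SetTerm → Set I.Δ
  | .role r => { e | I.role r d e }
  | .concept C => csem I C ∩ I.succs d
  | .empty => ∅
  | .univ => I.succs d
  | .inter s t => ssem I d s ∩ ssem I d t
  | .union s t => ssem I d s ∪ ssem I d t
  | .compl s => I.succs d \ ssem I d s

noncomputable def lsem (I : Interp) (d : I.Δ) : LinExpr → ℕ
  | .const n => n
  | .add l₁ l₂ => lsem I d l₁ + lsem I d l₂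
  | .card n s => n * (ssem I d s).ncard

noncomputable def qsat (I : Interp) (d : I.Δ) : QCon → Prop
  | .subset s t => ssem I d s ⊆ ssem I d t
  | .seteq s t => ssem I d s = ssem I d t
  | .numeq l₁ l₂ => lsem I d l₁ = lsem I d l₂
  | .numlt l₁ l₂ => lsem I d l₁ < lsem I d l₂
  | .dvd n l => n ∣ lsem I d l
  | .not c => ¬ qsat I d c
  | .and c₁ c₂ => qsat I d c₁ ∧ qsat I d c₂
  | .or c₁ c₂ => qsat I d c₁ ∨ qsat I d c₂
end

/-- A finitely branching model of an SSCC TBox: all concept inclusions hold and all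
declared-transitive roles are interpreted by transitive relations. -/
def IsModel (I : Interp) (T : STBox) : Prop :=
  FinBranching I ∧ (∀ ci ∈ T.cis, csem I ci.1 ⊆ csem I ci.2) ∧
    ∀ r ∈ T.trans, Transitive (I.role r)

def Consistent (T : STBox) : Prop := ∃ I : Interp, IsModel I T

/-! ### Derived operations -/

def bot : Concept := Concept.conj (Concept.atom 0) (Concept.neg (Concept.atom 0))
def top : Concept := Concept.neg bot
def cOr (C₁ C₂ : Concept) : Concept := Concept.neg (Concept.conj (Concept.neg C₁) (Concept.neg C₂))
def bigOr (l : List Concept) : Concept := l.foldr cOr bot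
def bigAnd (l : List Concept) : Concept := l.foldr Concept.conj top

/-! ### The tiling TBox -/

/-- A tiling problem: tile types `Fin m` with horizontal/vertical matching relations. -/
structure Tiling : Type where
  m : ℕ
  H : Finset (Fin m × Fin m)
  V : Finset (Fin m × Fin m)

/-- A solution of the tiling problem. -/
def Tiling.Solvable (P : Tiling) : Prop :=
  ∃ π : ℕ → ℕ → Fin P.m,
    ∀ i j : ℕ, (π i j, π (i + 1) j) ∈ P.H ∧ (π i j, π i (j + 1)) ∈ P.V

namespace TP

variable (P : Tiling)

/-- Concept name `A_t` for a tile type. -/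
def At (t : Fin P.m) : Concept := Concept.atom t.val
/-- Concept name `A_ij`, `i, j ∈ {0,1}`. -/
def Aij (i j : Bool) : Concept :=
  Concept.atom (P.m + (cond i 2 0) + (cond j 1 0))
/-- The roles `h`, `v`, `h_i`, `v_j`, `r_ij`. -/
def hR : ℕ := 0
def vR : ℕ := 1
def hiR (i : Bool) : ℕ := 2 + cond i 1 0
def vjR (j : Bool) : ℕ := 4 + cond j 1 0
def rijR (i j : Bool) : ℕ := 6 + (cond i 2 0) + (cond j 1 0)

def bools : List Bool := [false, true]

/-- `|s| = 1`. -/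
def cardOne (s : SetTerm) : QCon := QCon.numeq (LinExpr.card 1 s) (LinExpr.const 1)

/-- role inclusion `r ⊑ s`, i.e. `⊤ ⊑ succ(r ⊆ s)`. -/
def roleIncl (r s : ℕ) : Concept × Concept :=
  (top, Concept.succr (QCon.subset (SetTerm.role r) (SetTerm.role s)))

/-- exactly-one-of for a list of concepts. -/
def exactlyOne (l : List Concept) : Concept :=
  Concept.conj (bigOr l)
    (bigAnd ((l.zipIdx.map Prod.swap).flatMap fun p => (l.zipIdx.map Prod.swap).filterMap fun q =>
      if p.1 ≠ q.1 then some (Concept.neg (Concept.conj p.2 q.2)) else none))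

/-- The SSCC TBox `T_P`. -/
def tilingTBox : STBox where
  cis :=
    -- (successors)
    [(top, exactlyOne ((List.finRange P.m).map (At P))),
     (top, Concept.succr (QCon.and (cardOne (SetTerm.role hR)) (cardOne (SetTerm.role vR))))] ++
    -- (matching)
    ((List.finRange P.m).flatMap fun t =>
      [(At P t, Concept.succr (QCon.subset (SetTerm.role hR)
          (SetTerm.concept (bigOr ((List.finRange P.m).filterMap fun t' =>
            if (t, t') ∈ P.H then some (At P t') else none))))),
       (At P t, Concept.succr (QCon.subset (SetTerm.role vR)
          (SetTerm.concept (bigOr ((List.finRange P.m).filterMap fun t' =>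
            if (t, t') ∈ P.V then some (At P t') else none)))))]) ++
    -- (super): h_i ⊑ r_ij and v_j ⊑ r_ij
    (bools.flatMap fun i => bools.flatMap fun j =>
      [roleIncl (hiR i) (rijR i j), roleIncl (vjR j) (rijR i j)]) ++
    -- the four concepts A_ij partition the domain
    [(top, exactlyOne (bools.flatMap fun i => bools.map fun j => Aij P i j))] ++
    -- (local)
    (bools.flatMap fun i => bools.flatMap fun j =>
      [(Aij P i j, Concept.succr (QCon.and
          (QCon.subset (SetTerm.role hR) (SetTerm.concept (Aij P (!i) j)))
          (QCon.subset (SetTerm.role vR) (SetTerm.concept (Aij P i (!j)))))),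
       (Aij P i j, Concept.succr (QCon.and
          (QCon.seteq (SetTerm.role hR) (SetTerm.role (hiR i)))
          (QCon.seteq (SetTerm.role vR) (SetTerm.role (vjR j)))))]) ++
    -- (⋆)
    [(top, Concept.succr (cardOne (SetTerm.inter
        (SetTerm.compl (SetTerm.role hR)) (SetTerm.compl (SetTerm.role vR)))))]
  trans := bools.flatMap fun i => bools.map fun j => rijR i j

end TP


open TP in
private lemma mem_cis_card (P : Tiling) :
    (top, Concept.succr (QCon.and (cardOne (SetTerm.role hR)) (cardOne (SetTerm.role vR))))
      ∈ (tilingTBox P).cis := by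
  simp [tilingTBox]

open TP in
private lemma mem_cis_part (P : Tiling) :
    (top, exactlyOne (bools.flatMap fun i => bools.map fun j => Aij P i j))
      ∈ (tilingTBox P).cis := by
  unfold tilingTBox
  simp only [List.mem_append]
  exact Or.inl (Or.inl (Or.inr (List.mem_singleton.mpr rfl)))

open TP in
private lemma mem_cis_local1 (P : Tiling) (i j : Bool) :
    (Aij P i j, Concept.succr (QCon.and
        (QCon.subset (SetTerm.role hR) (SetTerm.concept (Aij P (!i) j)))
        (QCon.subset (SetTerm.role vR) (SetTerm.concept (Aij P i (!j))))))
      ∈ (tilingTBox P).cis := by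
  cases i <;> cases j <;> simp [tilingTBox, bools]

open TP in
private lemma mem_cis_local2 (P : Tiling) (i j : Bool) :
    (Aij P i j, Concept.succr (QCon.and
        (QCon.seteq (SetTerm.role hR) (SetTerm.role (hiR i)))
        (QCon.seteq (SetTerm.role vR) (SetTerm.role (vjR j)))))
      ∈ (tilingTBox P).cis := by
  cases i <;> cases j <;> simp [tilingTBox, bools]

open TP in
private lemma mem_cis_super_h (P : Tiling) (i j : Bool) :
    roleIncl (hiR i) (rijR i j) ∈ (tilingTBox P).cis := by
  cases i <;> cases j <;> simp [tilingTBox, bools]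

open TP in
private lemma mem_cis_super_v (P : Tiling) (i j : Bool) :
    roleIncl (vjR j) (rijR i j) ∈ (tilingTBox P).cis := by
  cases i <;> cases j <;> simp [tilingTBox, bools]

open TP in
private lemma mem_cis_star (P : Tiling) :
    (top, Concept.succr (cardOne (SetTerm.inter
        (SetTerm.compl (SetTerm.role hR)) (SetTerm.compl (SetTerm.role vR)))))
      ∈ (tilingTBox P).cis := by
  simp [tilingTBox]

open TP in
private lemma mem_trans_rij (P : Tiling) (i j : Bool) :
    rijR i j ∈ (tilingTBox P).trans := by
  cases i <;> cases j <;> simp [tilingTBox, bools]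

private lemma exu_of_singleton {α : Type*} {p : α → Prop} (h : ∃ a, {x | p x} = {a}) :
    ∃! a, p a := by
  obtain ⟨a, ha⟩ := h
  rw [Set.eq_singleton_iff_unique_mem] at ha
  exact ⟨a, ha.1, fun y hy => ha.2 y hy⟩

open TP in
private theorem tiling_hv_commute_functional_aux
    (P : Tiling) (I : Interp) (hI : IsModel I (tilingTBox P)) :
    (∀ d e : I.Δ,
        (∃ c, I.role hR d c ∧ I.role vR c e) ↔ (∃ c, I.role vR d c ∧ I.role hR c e)) ∧
    (∀ d : I.Δ, ∃! e : I.Δ, ∃ c, I.role hR d c ∧ I.role vR c e) := by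
  obtain ⟨hfin, hcis, htrans⟩ := hI
  have mtop : ∀ d : I.Δ, d ∈ csem I top := fun d => by simp [top, bot, csem]
  -- unique h- and v-successors
  have hcard : ∀ d : I.Δ, (∃! e, I.role hR d e) ∧ (∃! e, I.role vR d e) := by
    intro d
    have h := hcis _ (mem_cis_card P) (mtop d)
    simp only [csem, qsat, cardOne, lsem, ssem, Set.mem_setOf_eq, one_mul] at h
    rw [Set.ncard_eq_one, Set.ncard_eq_one] at h
    exact ⟨exu_of_singleton h.1, exu_of_singleton h.2⟩
  -- the partition into the four A_ij
  have hpart : ∀ d : I.Δ, ∃ i j : Bool, d ∈ I.conc (P.m + cond i 2 0 + cond j 1 0) := by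
    intro d
    have key := hcis _ (mem_cis_part P) (mtop d)
    simp only [exactlyOne, bools, csem, bigOr, bigAnd, cOr, bot, top, List.flatMap,
      List.map, List.zipIdx, Prod.swap, List.foldr_cons, List.foldr_nil, List.flatten_cons, List.flatten_nil, List.cons_append, List.nil_append, List.filterMap, List.append_nil, Set.mem_inter_iff,
      Set.mem_compl_iff, not_and, not_not, cond_true, cond_false] at key
    obtain ⟨hex, -⟩ := key
    by_contra hc
    push_neg at hc
    have c00 := hc false false; have c01 := hc false true
    have c10 := hc true false; have c11 := hc true true
    simp only [cond_true, cond_false] at c00 c01 c10 c11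
    tauto
  have hdisj : ∀ (d : I.Δ) (i j i' j' : Bool),
      d ∈ I.conc (P.m + cond i 2 0 + cond j 1 0) →
      d ∈ I.conc (P.m + cond i' 2 0 + cond j' 1 0) → i = i' ∧ j = j' := by
    intro d i j i' j' h1 h2
    have key := hcis _ (mem_cis_part P) (mtop d)
    simp only [exactlyOne, bools, csem, bigOr, bigAnd, cOr, bot, top, List.flatMap,
      List.map, List.zipIdx, Prod.swap, List.foldr_cons, List.foldr_nil, List.flatten_cons, List.flatten_nil, List.cons_append, List.nil_append, List.filterMap, List.append_nil, Set.mem_inter_iff,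
      Set.mem_compl_iff, not_and, not_not, cond_true, cond_false, Nat.reduceAdd, ne_eq,
      Nat.reduceEqDiff, not_true_eq_false, not_false_eq_true, ↓reduceIte] at key
    obtain ⟨-, k1, k2, k3, k4, k5, k6, k7, k8, k9, k10, k11, k12, -⟩ := key
    cases i <;> cases j <;> cases i' <;> cases j' <;>
      simp only [cond_true, cond_false] at h1 h2 <;>
      first
        | exact ⟨rfl, rfl⟩
        | exact absurd h2 (k1 h1)
        | exact absurd h2 (k2 h1)
        | exact absurd h2 (k3 h1)
        | exact absurd h2 (k4 h1)
        | exact absurd h2 (k5 h1)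
        | exact absurd h2 (k6 h1)
        | exact absurd h2 (k7 h1)
        | exact absurd h2 (k8 h1)
        | exact absurd h2 (k9 h1)
        | exact absurd h2 (k10 h1)
        | exact absurd h2 (k11 h1)
        | exact absurd h2 (k12 h1)
  -- local axioms, first group
  have hloc1 : ∀ (i j : Bool) (d e : I.Δ), d ∈ I.conc (P.m + cond i 2 0 + cond j 1 0) →
      (I.role hR d e → e ∈ I.conc (P.m + cond (!i) 2 0 + cond j 1 0)) ∧
      (I.role vR d e → e ∈ I.conc (P.m + cond i 2 0 + cond (!j) 1 0)) := by
    intro i j d e hd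
    have h := hcis _ (mem_cis_local1 P i j) (by simpa [Aij, csem] using hd)
    simp only [csem, qsat, ssem, Aij, Set.mem_setOf_eq] at h
    exact ⟨fun hr => (h.1 hr).1, fun hr => (h.2 hr).1⟩
  -- local axioms, second group
  have hloc2 : ∀ (i j : Bool) (d : I.Δ), d ∈ I.conc (P.m + cond i 2 0 + cond j 1 0) →
      ({e | I.role hR d e} = {e | I.role (hiR i) d e}) ∧
      ({e | I.role vR d e} = {e | I.role (vjR j) d e}) := by
    intro i j d hd
    have h := hcis _ (mem_cis_local2 P i j) (by simpa [Aij, csem] using hd)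
    simp only [csem, qsat, ssem, Set.mem_setOf_eq] at h
    exact h
  -- super roles
  have hsuph : ∀ (i j : Bool) (d e : I.Δ), I.role (hiR i) d e → I.role (rijR i j) d e := by
    intro i j d e hr
    have h := hcis _ (mem_cis_super_h P i j) (mtop d)
    simp only [roleIncl, csem, qsat, ssem, Set.mem_setOf_eq] at h
    exact h hr
  have hsupv : ∀ (i j : Bool) (d e : I.Δ), I.role (vjR j) d e → I.role (rijR i j) d e := by
    intro i j d e hr
    have h := hcis _ (mem_cis_super_v P i j) (mtop d)
    simp only [roleIncl, csem, qsat, ssem, Set.mem_setOf_eq] at h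
    exact h hr
  have htr : ∀ i j : Bool, Transitive (I.role (rijR i j)) :=
    fun i j => htrans _ (mem_trans_rij P i j)
  -- the star axiom
  have hstar : ∀ d : I.Δ, ∃ a,
      (I.succs d \ {e | I.role hR d e}) ∩ (I.succs d \ {e | I.role vR d e}) = {a} := by
    intro d
    have h := hcis _ (mem_cis_star P) (mtop d)
    simp only [csem, qsat, cardOne, lsem, ssem, Set.mem_setOf_eq, one_mul] at h
    rwa [Set.ncard_eq_one] at h
  -- key: any h∘v successor equals any v∘h successor
  have key : ∀ d e e' : I.Δ, (∃ c, I.role hR d c ∧ I.role vR c e) →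
      (∃ c, I.role vR d c ∧ I.role hR c e') → e = e' := by
    rintro d e e' ⟨c₁, hdc₁, hc₁e⟩ ⟨c₂, hdc₂, hc₂e⟩
    obtain ⟨i, j, hd⟩ := hpart d
    have hc₁A : c₁ ∈ I.conc (P.m + cond (!i) 2 0 + cond j 1 0) := (hloc1 i j d c₁ hd).1 hdc₁
    have hc₂A : c₂ ∈ I.conc (P.m + cond i 2 0 + cond (!j) 1 0) := (hloc1 i j d c₂ hd).2 hdc₂
    have heA : e ∈ I.conc (P.m + cond (!i) 2 0 + cond (!j) 1 0) :=
      (hloc1 (!i) j c₁ e hc₁A).2 hc₁e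
    have heA' : e' ∈ I.conc (P.m + cond (!i) 2 0 + cond (!j) 1 0) :=
      (hloc1 i (!j) c₂ e' hc₂A).1 hc₂e
    -- e is an r_ij-successor of d
    have r1 : I.role (rijR i j) d e := by
      have e1 : I.role (hiR i) d c₁ := Set.ext_iff.mp (hloc2 i j d hd).1 c₁ |>.1 hdc₁
      have e2 : I.role (vjR j) c₁ e := Set.ext_iff.mp (hloc2 (!i) j c₁ hc₁A).2 e |>.1 hc₁e
      exact htr i j (hsuph i j d c₁ e1) (hsupv i j c₁ e e2)
    have r2 : I.role (rijR i j) d e' := by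
      have e1 : I.role (vjR j) d c₂ := Set.ext_iff.mp (hloc2 i j d hd).2 c₂ |>.1 hdc₂
      have e2 : I.role (hiR i) c₂ e' := Set.ext_iff.mp (hloc2 i (!j) c₂ hc₂A).1 e' |>.1 hc₂e
      exact htr i j (hsupv i j d c₂ e1) (hsuph i j c₂ e' e2)
    -- e and e' are neither h- nor v-successors of d
    have notj : (!j) ≠ j := Bool.not_ne_self j
    have noti : (!i) ≠ i := Bool.not_ne_self i
    have star_mem : ∀ x : I.Δ, I.role (rijR i j) d x →
        x ∈ I.conc (P.m + cond (!i) 2 0 + cond (!j) 1 0) →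
        x ∈ (I.succs d \ {e | I.role hR d e}) ∩ (I.succs d \ {e | I.role vR d e}) := by
      intro x hrx hxA
      refine ⟨⟨⟨rijR i j, hrx⟩, fun hx => ?_⟩, ⟨⟨rijR i j, hrx⟩, fun hx => ?_⟩⟩
      · have : x ∈ I.conc (P.m + cond (!i) 2 0 + cond j 1 0) := (hloc1 i j d x hd).1 hx
        exact notj (hdisj x (!i) (!j) (!i) j hxA this).2
      · have : x ∈ I.conc (P.m + cond i 2 0 + cond (!j) 1 0) := (hloc1 i j d x hd).2 hx
        exact noti (hdisj x (!i) (!j) i (!j) hxA this).1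
    obtain ⟨a, ha⟩ := hstar d
    have h1 : e ∈ ({a} : Set I.Δ) := ha ▸ star_mem e r1 heA
    have h2 : e' ∈ ({a} : Set I.Δ) := ha ▸ star_mem e' r2 heA'
    rw [Set.mem_singleton_iff] at h1 h2
    rw [h1, h2]
  -- assembling the statement
  have total_hv : ∀ d : I.Δ, ∃ e c : I.Δ, I.role hR d c ∧ I.role vR c e := by
    intro d
    obtain ⟨c, hc, -⟩ := (hcard d).1
    obtain ⟨e, he, -⟩ := (hcard c).2
    exact ⟨e, c, hc, he⟩
  have total_vh : ∀ d : I.Δ, ∃ e c : I.Δ, I.role vR d c ∧ I.role hR c e := by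
    intro d
    obtain ⟨c, hc, -⟩ := (hcard d).2
    obtain ⟨e, he, -⟩ := (hcard c).1
    exact ⟨e, c, hc, he⟩
  constructor
  · intro d e
    constructor
    · intro h
      obtain ⟨e', c', hdc', hc'e⟩ := total_vh d
      have := key d e e' h ⟨c', hdc', hc'e⟩
      exact ⟨c', hdc', this ▸ hc'e⟩
    · intro h
      obtain ⟨e', c', hdc', hc'e⟩ := total_hv d
      have := key d e' e ⟨c', hdc', hc'e⟩ h
      exact ⟨c', hdc', this ▸ hc'e⟩
  · intro d
    obtain ⟨e, c, hdc, hce⟩ := total_hv d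
    refine ⟨e, ⟨c, hdc, hce⟩, ?_⟩
    rintro y ⟨c', hdc', hc'y⟩
    have hcc : c' = c := ((hcard d).1.unique hdc' hdc)
    exact (hcard c).2.unique (hcc ▸ hc'y) hce

open TP in
/-- In every finitely branching model `I` of the tiling TBox `T_P`, the
relations `h^I ∘ v^I` and `v^I ∘ h^I` coincide, and this relation is functional. -/
theorem tiling_hv_commute_functional
    (P : Tiling) (I : Interp) (hI : IsModel I (tilingTBox P)) :
    (∀ d e : I.Δ,
        (∃ c, I.role hR d c ∧ I.role vR c e) ↔ (∃ c, I.role vR d c ∧ I.role hR c e)) ∧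
    (∀ d : I.Δ, ∃! e : I.Δ, ∃ c, I.role hR d c ∧ I.role vR c e) := by
  exact tiling_hv_commute_functional_aux P I hI

end SSCC
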